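/- (Primal–dual identity for the entropy-regularized objective.) Let π be a policy with π(s,a) > 0 for all (s,a), let ℓ ∈ ℝ^{S×A} be the vector ℓ(s,a) := log π(s,a), and let q̃ := Ψ(π)⁻¹ (r − γ P Π(π) ℓ) be the soft state–action value (so Ψ(π) q̃ = r − γPΠ(π)ℓ, i.e., q̃ = r + γPΠ(π)(q̃ − ℓ)). Then d(π)ᵀ (r − ℓ) = (1−γ) μ0ᵀ Π(π) (q̃ − ℓ). -/

import Mathlib

/-!
The identity is pure linear algebra. Transposing, `d(π)ᵀ v = (1 - γ) μ0ᵀ Π(π) Ψ(π)⁻¹ v` for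
every `v`; and since `Ψ(π) ℓ = ℓ - γ P Π(π) ℓ`, applying `Ψ(π)⁻¹` to
`r - ℓ = (r - γ P Π(π) ℓ) - Ψ(π) ℓ` gives `Ψ(π)⁻¹ (r - ℓ) = q̃ - ℓ`. That `Ψ(π)` is invertible
follows from `P Π(π)` being row-stochastic, so that `γ P Π(π)` has ∞-operator norm `γ < 1`.
-/

open Matrix

noncomputable section

variable {S A : Type*} [Fintype S] [Fintype A] [DecidableEq S] [DecidableEq A]
  [Nonempty S] [Nonempty A]

/-- A policy: nonnegative entries, and for each state the action probabilities sum to one. -/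
def IsPolicy (x : S × A → ℝ) : Prop :=
  (∀ p, 0 ≤ x p) ∧ ∀ s : S, ∑ a : A, x (s, a) = 1

/-- A row-stochastic transition matrix. -/
def IsStochasticMat (P : Matrix (S × A) S ℝ) : Prop :=
  (∀ p s, 0 ≤ P p s) ∧ ∀ p, ∑ s : S, P p s = 1

/-- A probability vector on states. -/
def IsProbVec (μ : S → ℝ) : Prop :=
  (∀ s, 0 ≤ μ s) ∧ ∑ s : S, μ s = 1

/-- The block policy matrix `Π(x) ∈ ℝ^{S × (S×A)}`. -/
def piMat (x : S × A → ℝ) : Matrix S (S × A) ℝ :=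
  Matrix.of fun s p => if p.1 = s then x p else 0

/-- The action-marginalization matrix `Ξ ∈ ℝ^{S × (S×A)}`. -/
def xiMat : Matrix S (S × A) ℝ :=
  Matrix.of fun s p => if p.1 = s then (1 : ℝ) else 0

/-- `Ψ(x) = I - γ P Π(x)`. -/
def psiMat (P : Matrix (S × A) S ℝ) (γ : ℝ) (x : S × A → ℝ) :
    Matrix (S × A) (S × A) ℝ :=
  1 - γ • (P * piMat x)

/-- The discounted state-action occupancy `d(x) = (1-γ)(Ψ(x)ᵀ)⁻¹ Π(x)ᵀ μ0`. -/
def dOcc (P : Matrix (S × A) S ℝ) (γ : ℝ) (μ0 : S → ℝ) (x : S × A → ℝ) :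
    S × A → ℝ :=
  (1 - γ) • (((psiMat P γ x)ᵀ)⁻¹ *ᵥ ((piMat x)ᵀ *ᵥ μ0))

lemma isUnit_one_sub_smul_of_row_sum_abs_le_one {n : Type*} [Fintype n] [DecidableEq n]
    (M : Matrix n n ℝ) (hM : ∀ i, ∑ j, |M i j| ≤ 1) {γ : ℝ} (hγ : |γ| < 1) :
    IsUnit (1 - γ • M) := by
  let := Matrix.linftyOpNormedRing (n := n) (α := ℝ)
  let := Matrix.linftyOpNormedAlgebra (R := ℝ) (n := n) (α := ℝ)
  have : CompleteSpace (Matrix n n ℝ) := FiniteDimensional.complete ℝ _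
  have hM_norm : ‖M‖₊ ≤ 1 := by
    rw [Matrix.linfty_opNNNorm_def, Finset.sup_le_iff]
    intro i _
    rw [← NNReal.coe_le_coe, NNReal.coe_sum, NNReal.coe_one]
    simpa only [coe_nnnorm, Real.norm_eq_abs] using hM i
  have hγM : ‖γ • M‖ < 1 := calc
    ‖γ • M‖ = |γ| * ‖M‖ := by rw [norm_smul, Real.norm_eq_abs]
    _ ≤ |γ| * 1 := by gcongr; exact_mod_cast hM_norm
    _ < 1 := by rwa [mul_one]
  exact (Units.oneSub _ hγM).isUnit

-- Own type binders keep the section's unneeded instances (`Nonempty`, ...) out of the lemmas below.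
lemma mul_piMat_apply {S A : Type*} [Fintype S] [DecidableEq S]
    (P : Matrix (S × A) S ℝ) (x : S × A → ℝ) (p q : S × A) :
    (P * piMat x) p q = P p q.1 * x q := by
  simp [Matrix.mul_apply, piMat, Finset.sum_ite_eq]

lemma sum_mul_piMat_apply {S A : Type*} [Fintype S] [Fintype A] [DecidableEq S]
    (P : Matrix (S × A) S ℝ) {x : S × A → ℝ} (hx : ∀ s, ∑ a, x (s, a) = 1) (p : S × A) :
    ∑ q, (P * piMat x) p q = ∑ s, P p s := by
  simp only [mul_piMat_apply, Fintype.sum_prod_type, ← Finset.mul_sum, hx, mul_one]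

lemma isUnit_psiMat {S A : Type*} [Fintype S] [Fintype A] [DecidableEq S] [DecidableEq A]
    {P : Matrix (S × A) S ℝ} (hP : IsStochasticMat P)
    {γ : ℝ} (hγ0 : 0 ≤ γ) (hγ1 : γ < 1) {x : S × A → ℝ} (hx : IsPolicy x) :
    IsUnit (psiMat P γ x) := by
  refine isUnit_one_sub_smul_of_row_sum_abs_le_one _ (fun p => ?_)
    (abs_lt.mpr ⟨by linarith, hγ1⟩)
  have hnonneg : ∀ q, 0 ≤ (P * piMat x) p q := fun q => by
    rw [mul_piMat_apply]; exact mul_nonneg (hP.1 p q.1) (hx.1 q)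
  simp only [abs_of_nonneg (hnonneg _), sum_mul_piMat_apply P hx.2, hP.2 p, le_refl]

lemma dOcc_dotProduct {S A : Type*} [Fintype S] [Fintype A] [DecidableEq S] [DecidableEq A]
    (P : Matrix (S × A) S ℝ) (γ : ℝ) (μ0 : S → ℝ) (x v : S × A → ℝ) :
    dOcc P γ μ0 x ⬝ᵥ v =
      (1 - γ) * (μ0 ⬝ᵥ (piMat x *ᵥ ((psiMat P γ x)⁻¹ *ᵥ v))) := by
  rw [dOcc, smul_dotProduct, smul_eq_mul, ← Matrix.transpose_nonsing_inv, Matrix.mulVec_transpose,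
    Matrix.mulVec_transpose, ← Matrix.dotProduct_mulVec, ← Matrix.dotProduct_mulVec]

lemma inv_one_sub_mulVec_sub {n R : Type*} [Fintype n] [DecidableEq n] [CommRing R]
    (K : Matrix n n R) (hK : IsUnit (1 - K).det) (r ℓ : n → R) :
    (1 - K)⁻¹ *ᵥ (r - ℓ) = (1 - K)⁻¹ *ᵥ (r - K *ᵥ ℓ) - ℓ := by
  have hr : r - ℓ = (r - K *ᵥ ℓ) - (1 - K) *ᵥ ℓ := by
    rw [Matrix.sub_mulVec, Matrix.one_mulVec]; abel
  rw [hr, Matrix.mulVec_sub, Matrix.mulVec_mulVec, Matrix.nonsing_inv_mul _ hK, Matrix.one_mulVec]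

theorem soft_primal_dual_identity_general
    (P : Matrix (S × A) S ℝ) (hP : IsStochasticMat P)
    (γ : ℝ) (hγ0 : 0 ≤ γ) (hγ1 : γ < 1)
    (r : S × A → ℝ) (μ0 : S → ℝ)
    (x : S × A → ℝ) (hx : IsPolicy x) :
    dOcc P γ μ0 x ⬝ᵥ (r - fun p => Real.log (x p))
      = (1 - γ) *
        (μ0 ⬝ᵥ (piMat x *ᵥ
          (((psiMat P γ x)⁻¹ *ᵥ
              (r - γ • ((P * piMat x) *ᵥ fun p => Real.log (x p))))
            - fun p => Real.log (x p)))) := by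
  have hΨ : IsUnit (psiMat P γ x).det :=
    (Matrix.isUnit_iff_isUnit_det _).mp (isUnit_psiMat hP hγ0 hγ1 hx)
  rw [dOcc_dotProduct, ← Matrix.smul_mulVec]
  unfold psiMat at hΨ ⊢
  rw [inv_one_sub_mulVec_sub _ hΨ]

/-- primal–dual identity for the entropy-regularized objective:
with `ℓ = log π` and the soft value `q̃ = Ψ(π)⁻¹(r - γPΠ(π)ℓ)`,
`d(π)ᵀ(r - ℓ) = (1-γ) μ0ᵀ Π(π) (q̃ - ℓ)`. -/
theorem soft_primal_dual_identity
    (P : Matrix (S × A) S ℝ) (hP : IsStochasticMat P)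
    (γ : ℝ) (hγ0 : 0 ≤ γ) (hγ1 : γ < 1)
    (r : S × A → ℝ) (μ0 : S → ℝ) (hμ0 : IsProbVec μ0)
    (x : S × A → ℝ) (hx : IsPolicy x) (hxpos : ∀ p : S × A, 0 < x p) :
    dOcc P γ μ0 x ⬝ᵥ (r - fun p => Real.log (x p))
      = (1 - γ) *
        (μ0 ⬝ᵥ (piMat x *ᵥ
          (((psiMat P γ x)⁻¹ *ᵥ
              (r - γ • ((P * piMat x) *ᵥ fun p => Real.log (x p))))
            - fun p => Real.log (x p)))) :=
  soft_primal_dual_identity_general P hP γ hγ0 hγ1 r μ0 x hx
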